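/- Fix a non-compact well-ordered space J. If X and Y are J-convergence spaces, then the k-product and the J-product coincide: the topologies of X ×_k Y and X ×_J Y on the set X × Y are equal. -/

import Mathlib

open Set Topology TopologicalSpace

universe u v w

/-- The order topology on `WithTop α`; for a noncompact well-ordered `α` with the order
topology, `WithTop α` with this topology is the one-point (Alexandroff) compactification
`α ∪ {∞_α}`, in which `⊤ = ∞_α` is the maximum. -/
noncomputable instance withTopOrderTopology {α : Type*} [Preorder α] :
    TopologicalSpace (WithTop α) := Preorder.topology _

/-- `I` is almost closed in the ordered topological space `S`:
`closure I \ I = {ℓ}` where `ℓ = min {s ∈ S | I < s}`. -/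
def AlmostClosedIn {S : Type*} [LinearOrder S] [TopologicalSpace S] (I : Set S) : Prop :=
  ∃ ℓ : S, closure I \ I = {ℓ} ∧ IsLeast {s : S | ∀ i ∈ I, i < s} ℓ

/-- `I ⊆ J` is almost closed in `J ∪ {∞_J}` (modeled as `WithTop J` with the order topology). -/
def AlmostClosed {J : Type*} [LinearOrder J] (I : Set J) : Prop :=
  AlmostClosedIn ((fun j : J => (j : WithTop J)) '' I)

/-- A subset `C ⊆ X` is `J`-closed: for every almost closed `I ⊆ J` and continuous
`f : I ∪ {∞_I} → X` (where `I ∪ {∞_I} = WithTop ↥I` is the one-point compactification of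
`I` with its internal order topology) with `f(I) ⊆ C` one has `f(∞_I) ∈ C`. -/
def JClosedSet (J : Type v) [LinearOrder J] (X : Type u) [TopologicalSpace X] (C : Set X) : Prop :=
  ∀ I : Set J, AlmostClosed I → ∀ f : WithTop ↥I → X, Continuous f →
    (∀ i : ↥I, f (WithTop.some i) ∈ C) → f ⊤ ∈ C

/-- `U ⊆ X` is `J`-open iff its complement is `J`-closed. -/
def JOpenSet (J : Type v) [LinearOrder J] (X : Type u) [TopologicalSpace X] (U : Set X) : Prop :=
  JClosedSet J X Uᶜ

/-- `X` is a `J`-convergence space. -/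
def IsJConvergence (J : Type v) [LinearOrder J] (X : Type u) [TopologicalSpace X] : Prop :=
  ∀ A : Set X, ¬ IsClosed A →
    ∃ I : Set J, AlmostClosed I ∧ ∃ f : WithTop ↥I → X, Continuous f ∧
      (∀ i : ↥I, f (WithTop.some i) ∈ A) ∧ f ⊤ ∉ A

/-- `JX`: the topology of `J`-open sets. -/
noncomputable def jTop (J : Type v) [LinearOrder J] (X : Type u) [tX : TopologicalSpace X] :
    TopologicalSpace X := generateFrom {U : Set X | JOpenSet J X U}

/-- `K` is a compact Hausdorff witness for the failure of `A` to be closed. -/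
def CGWitness (K : Type v) [tK : TopologicalSpace K] (X : Type u) [TopologicalSpace X]
    (A : Set X) : Prop :=
  CompactSpace K ∧ T2Space K ∧ ∃ f : K → X, Continuous f ∧ ¬ IsClosed (f ⁻¹' A)

/-- `X` is compactly generated. -/
def CompactlyGen.{v', u'} (X : Type u') [TopologicalSpace X] : Prop :=
  ∀ A : Set X, ¬ IsClosed A → ∃ (K : Type v') (tK : TopologicalSpace K), @CGWitness K tK X _ A

/-- `kX`: `U` is open iff `f ⁻¹ U` is open for every continuous map from a compact
Hausdorff space. -/
def kTop.{v', u'} (X : Type u') [tX : TopologicalSpace X] : TopologicalSpace X :=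
  generateFrom {U : Set X |
    ∀ (K : Type v') (tK : TopologicalSpace K), @CompactSpace K tK → @T2Space K tK →
      ∀ f : K → X, Continuous[tK, tX] f → IsOpen[tK] (f ⁻¹' U)}

/-- The directed topology on the successor `J' ∪ {∞} = WithTop J'`: generated by singletons
`{j}` and final segments `(j, ∞]` for `j ∈ J'`. -/
def directedTopology (J' : Type*) [Preorder J'] : TopologicalSpace (WithTop J') :=
  generateFrom {s : Set (WithTop J') |
    (∃ j : J', s = {WithTop.some j}) ∨ ∃ j : J', s = Ioi (WithTop.some j)}

/-- `J'` witnesses transfinite convergence into `A`. -/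
def TransfiniteWitness (J' : Type v) [LinearOrder J'] (X : Type u) [TopologicalSpace X]
    (A : Set X) : Prop :=
  WellFoundedLT J' ∧ Nonempty J' ∧ NoMaxOrder J' ∧
    ∃ f : WithTop J' → X, Continuous[directedTopology J', _] f ∧
      (∀ j : J', f (WithTop.some j) ∈ A) ∧ f ⊤ ∉ A

/-- `X` is a transfinite sequential space. -/
def TransfiniteSequential.{v', u'} (X : Type u') [TopologicalSpace X] : Prop :=
  ∀ A : Set X, ¬ IsClosed A →
    ∃ (J' : Type v') (lo : LinearOrder J'), @TransfiniteWitness J' lo X _ A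

/-- `X` is a `J`-unique convergence space. -/
def JUnique (J : Type v) [LinearOrder J] (X : Type u) [TopologicalSpace X] : Prop :=
  ∀ I : Set J, AlmostClosed I → ∀ f g : WithTop ↥I → X, Continuous f → Continuous g →
    (∀ i : ↥I, f (WithTop.some i) = g (WithTop.some i)) → f = g

/-- The set `M(X,Y)` of continuous maps between spaces with explicitly given topologies. -/
def Cts (X : Type u) (Y : Type w) (tX : TopologicalSpace X) (tY : TopologicalSpace Y) :=
  {f : X → Y // Continuous[tX, tY] f}

/-- The `𝒥`-open topology on `M(X,Y)`, generated by the sets `W(t,U)`. -/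
noncomputable def mjTop (J : Type v) [LinearOrder J] {X : Type u} {Y : Type w}
    (tX : TopologicalSpace X) (tY : TopologicalSpace Y) :
    TopologicalSpace (Cts X Y tX tY) :=
  generateFrom {W : Set (Cts X Y tX tY) |
    ∃ I : Set J, AlmostClosed I ∧ ∃ t : WithTop ↥I → X, Continuous[_, tX] t ∧
      ∃ U : Set Y, IsOpen[tY] U ∧ W = {f | ∀ z : WithTop ↥I, f.1 (t z) ∈ U}}

/-
Both topologies are generated by sets tested against compact Hausdorff spaces, and every probe
`I ∪ {∞_I}` is compact Hausdorff, so the content is that a `J`-closed set `C ⊆ X × Y` pulls back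
to a closed set along every compact Hausdorff map. Two tube-lemma arguments, using that `X` and
`Y` are `J`-convergence spaces, reduce this to the fact that a product `P₁ × P₂` of two probe
spaces is itself a `J`-convergence space.

For that, take the lexicographically least point `(a, b)` of `closure C \ C`. The slices of `C`
through `a` and `b` are closed (the one-dimensional case), so `C` approaches `(a, b)` strictly
from below in both coordinates, and a maximal chain in `C`, strictly increasing in both
coordinates, has a supremum with first coordinate `a` or second coordinate `b`. Such a chain is
the image of a probe: discard the points whose first coordinate is a limit of earlier ones, let
`I` be the closure in `J ∪ {∞_J}` of the remaining first coordinates below their supremum (an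
almost closed set), and send `z ∈ I ∪ {∞_I}` to the coordinatewise supremum of the chain up to
`z`. By minimality of `a` the probe maps `I` into `C`, hence its limit, the supremum of the
chain, lies in `C`, which contradicts the choice of `(a, b)`.
-/

open Filter

instance WithTop.orderTopology {α : Type*} [Preorder α] : OrderTopology (WithTop α) :=
  ⟨rfl⟩

instance WithTop.compactSpace_of_wellFoundedLT {α : Type*} [LinearOrder α] [WellFoundedLT α] :
    CompactSpace (WithTop α) := by
  let _ := WellFoundedLT.toOrderBot (WithTop α)
  let _ := WellFoundedLT.conditionallyCompleteLinearOrderBot (WithTop α)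
  exact ⟨by simpa using isCompact_Icc (a := (⊥ : WithTop α)) (b := ⊤)⟩

theorem exists_isLUB_of_wellFoundedLT {α : Type*} [LinearOrder α] [WellFoundedLT α] [OrderTop α]
    (s : Set α) : ∃ a, IsLUB s a :=
  let ⟨a, ha, hmin⟩ := wellFounded_lt.has_min (upperBounds s) ⟨⊤, fun _ _ => le_top⟩
  ⟨a, ha, fun _ hb => not_lt.1 (hmin _ hb)⟩

theorem Monotone.tendsto_nhdsLT_of_isLUB {α β : Type*} [LinearOrder α] [TopologicalSpace α]
    [OrderTopology α] [LinearOrder β] [TopologicalSpace β] [OrderTopology β] {f : α → β}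
    (hf : Monotone f) {x : α} {b : β} (hb : IsLUB (f '' Iio x) b) :
    Tendsto f (𝓝[<] x) (𝓝 b) := by
  refine tendsto_order.2 ⟨fun l hl => ?_, fun m hm => ?_⟩
  · obtain ⟨_, ⟨z, hzx, rfl⟩, hlz, -⟩ := hb.exists_between hl
    filter_upwards [Ioo_mem_nhdsLT hzx] with y hy using hlz.trans_le (hf hy.1.le)
  · filter_upwards [self_mem_nhdsWithin] with y hy using
      (hb.1 (mem_image_of_mem f hy)).trans_lt hm

theorem IsChain.isLUB_mem_closure {γ : Type*} [Preorder γ] [TopologicalSpace γ]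
    [SupConvergenceClass γ] {V : Set γ} (hV : IsChain (· ≤ ·) V) (hne : V.Nonempty) {p : γ}
    (hp : IsLUB V p) : p ∈ closure V := by
  have : IsDirected V (· ≤ ·) := ⟨fun a b =>
    (hV.total a.2 b.2).elim (fun h => ⟨b, h, le_rfl⟩) fun h => ⟨a, le_rfl, h⟩⟩
  have : Nonempty V := hne.to_subtype
  exact mem_closure_of_tendsto (SupConvergenceClass.tendsto_coe_atTop_isLUB p V hp)
    (Eventually.of_forall Subtype.property)

theorem exists_isChain_of_forall_exists_gt {γ δ : Type*} [LinearOrder γ] [LinearOrder δ]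
    {B : Set (γ × δ)} {x₀ a : γ} {y₀ b : δ}
    (hB : ∀ x y, x₀ ≤ x → x < a → y₀ ≤ y → y < b → ∃ q ∈ B, x < q.1 ∧ y < q.2)
    (hBsub : B ⊆ Ioo x₀ a ×ˢ Ioo y₀ b) (hx₀ : x₀ < a) (hy₀ : y₀ < b) :
    ∃ V ⊆ B, V.Nonempty ∧ IsChain (· ≤ ·) V ∧ (∀ v ∈ V, ∃ w ∈ V, v.1 < w.1) ∧
      ∀ s, IsLUB V s → s.1 = a ∨ s.2 = b := by
  -- `R` only relates points of `B`, so a maximal `R`-chain through a point of `B` stays in `B`.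
  set R : γ × δ → γ × δ → Prop := fun v w => v ∈ B ∧ w ∈ B ∧ v.1 < w.1 ∧ v.2 < w.2
  obtain ⟨q₀, hq₀, -⟩ := hB x₀ y₀ le_rfl hx₀ le_rfl hy₀
  obtain ⟨M, hM, hq₀M⟩ := (subsingleton_singleton (a := q₀)).isChain (r := R).exists_maxChain
  have hMB : M ⊆ B := fun m hm => by
    rcases eq_or_ne m q₀ with rfl | hne
    · exact hq₀
    · exact (hM.isChain hm (hq₀M rfl) hne).elim (·.1) (·.2.1)
  have hext : ∀ q ∈ B, ¬ ∀ v ∈ M, v.1 < q.1 ∧ v.2 < q.2 := fun q hq h => by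
    have hqM : insert q M = M := (hM.2 (hM.isChain.insert fun v hv _ =>
      Or.inr ⟨hMB hv, hq, h v hv⟩) (subset_insert q M)).symm
    exact lt_irrefl _ (h q (hqM ▸ mem_insert q M)).1
  refine ⟨M, hMB, ⟨q₀, hq₀M rfl⟩,
    hM.isChain.mono_rel fun v w h => Prod.le_def.2 ⟨h.2.2.1.le, h.2.2.2.le⟩, ?_, ?_⟩
  · intro v hv
    by_contra! hvmax
    obtain ⟨⟨hv₁, hv₁a⟩, hv₂, hv₂b⟩ := hBsub (hMB hv)
    obtain ⟨q, hq, hvq₁, hvq₂⟩ := hB v.1 v.2 hv₁.le hv₁a hv₂.le hv₂b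
    refine hext q hq fun w hw => ?_
    rcases eq_or_ne w v with rfl | hne
    · exact ⟨hvq₁, hvq₂⟩
    · rcases hM.isChain hw hv hne with h | h
      · exact ⟨h.2.2.1.trans hvq₁, h.2.2.2.trans hvq₂⟩
      · exact absurd (hvmax w hw) (not_le.2 h.2.2.1)
  · intro s hs
    by_contra! hsab
    have hsle : s ≤ (a, b) := hs.2 fun v hv => ⟨(hBsub (hMB hv)).1.2.le, (hBsub (hMB hv)).2.2.le⟩
    have hq₀s : q₀ ≤ s := hs.1 (hq₀M rfl)
    obtain ⟨q, hq, hsq₁, hsq₂⟩ := hB s.1 s.2 ((hBsub hq₀).1.1.le.trans hq₀s.1)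
      (hsle.1.lt_of_ne hsab.1) ((hBsub hq₀).2.1.le.trans hq₀s.2) (hsle.2.lt_of_ne hsab.2)
    exact hext q hq fun v hv => ⟨(hs.1 hv).1.trans_lt hsq₁, (hs.1 hv).2.trans_lt hsq₂⟩

section WellOrderedSpace

variable {α β : Type*} [LinearOrder α] [WellFoundedLT α] [TopologicalSpace α] [OrderTopology α]
  [LinearOrder β] [TopologicalSpace β] [OrderTopology β]

theorem nhdsGT_eq_bot_of_wellFoundedLT (x : α) : 𝓝[>] x = ⊥ :=
  let _ := SuccOrder.ofLinearWellFoundedLT α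
  SuccOrder.nhdsGT

theorem Iic_mem_nhds_self (x : α) : Iic x ∈ 𝓝 x := by
  rw [← nhdsLE_sup_nhdsGT, nhdsGT_eq_bot_of_wellFoundedLT, sup_bot_eq]
  exact self_mem_nhdsWithin

theorem mem_closure_inter_Iic {s : Set α} {x : α} (hx : x ∈ closure s) :
    x ∈ closure (s ∩ Iic x) :=
  mem_closure_iff_nhds.2 fun t ht => by
    simpa only [inter_assoc, inter_comm (Iic x)] using
      mem_closure_iff_nhds.1 hx _ (inter_mem ht (Iic_mem_nhds_self x))

theorem exists_le_of_mem_closure {s : Set α} {x : α} (hx : x ∈ closure s) : ∃ y ∈ s, y ≤ x :=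
  (mem_closure_iff_nhds.1 hx _ (Iic_mem_nhds_self x)).imp fun _ h => ⟨h.2, h.1⟩

theorem mem_closure_inter_Iio {s : Set α} {x : α} (hx : x ∈ closure s) (hxs : x ∉ s) :
    x ∈ closure (s ∩ Iio x) := by
  have : s ∩ Iic x = s ∩ Iio x := by
    ext y; exact and_congr_right fun hy => (ne_of_mem_of_not_mem hy hxs).le_iff_lt
  exact this ▸ mem_closure_inter_Iic hx

theorem exists_gt_notMem_closure_inter_Iio {s : Set α} {x : α} (h : ∃ y ∈ s, x < y) :
    ∃ y ∈ s, x < y ∧ y ∉ closure (s ∩ Iio y) := by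
  obtain ⟨y, ⟨hys, hxy⟩, hmin⟩ := wellFounded_lt.has_min (s ∩ Ioi x) (h.imp fun _ h => h)
  refine ⟨y, hys, hxy, fun hy => hxy.not_ge (closure_minimal (fun t ht => ?_) isClosed_Iic hy)⟩
  exact not_lt.1 fun hxt => hmin t ⟨ht.1, hxt⟩ ht.2

theorem Monotone.continuous_of_isLUB_Iio {f : α → β} (hf : Monotone f)
    (hlim : ∀ x, x ∈ closure (Iio x) → IsLUB (f '' Iio x) (f x)) : Continuous f := by
  refine continuous_iff_continuousAt.2 fun x => continuousAt_iff_continuous_left_right.2 ⟨?_, ?_⟩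
  · rw [← continuousWithinAt_Iio_iff_Iic]
    by_cases hx : x ∈ closure (Iio x)
    · exact hf.tendsto_nhdsLT_of_isLUB (hlim x hx)
    · rw [mem_closure_iff_nhdsWithin_neBot, not_neBot] at hx
      simp [ContinuousWithinAt, hx]
  · rw [← continuousWithinAt_Ioi_iff_Ici]
    simp [ContinuousWithinAt, nhdsGT_eq_bot_of_wellFoundedLT]

theorem Monotone.continuous_of_isLUB {A : α → Set β} (hA : Monotone A)
    (hlim : ∀ x, x ∈ closure (Iio x) → ∀ b ∈ A x, ∃ y < x, b ∈ A y)
    {g : α → β} (hg : ∀ x, IsLUB (A x) (g x)) : Continuous g := by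
  have hgm : Monotone g := fun x y hxy => (hg x).mono (hg y) (hA hxy)
  refine hgm.continuous_of_isLUB_Iio fun x hx => ⟨?_, fun u hu => (hg x).2 fun b hb => ?_⟩
  · rintro _ ⟨y, hy, rfl⟩
    exact hgm (le_of_lt hy)
  · obtain ⟨y, hyx, hby⟩ := hlim x hx b hb
    exact ((hg y).1 hby).trans (hu (mem_image_of_mem g hyx))

theorem Monotone.continuous_of_isLUB_prod {γ : Type*} [LinearOrder γ] [TopologicalSpace γ]
    [OrderTopology γ] {T : α → Set (β × γ)} (hT : Monotone T)
    (hlim : ∀ x, x ∈ closure (Iio x) → ∀ p ∈ T x, ∃ y < x, p ∈ T y)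
    {g : α → β × γ} (hg : ∀ x, IsLUB (T x) (g x)) : Continuous g := by
  have hfst : ∀ x, x ∈ closure (Iio x) → ∀ b ∈ Prod.fst '' T x, ∃ y < x, b ∈ Prod.fst '' T y := by
    rintro x hx _ ⟨p, hp, rfl⟩
    obtain ⟨y, hyx, hpy⟩ := hlim x hx p hp
    exact ⟨y, hyx, mem_image_of_mem _ hpy⟩
  have hsnd : ∀ x, x ∈ closure (Iio x) → ∀ b ∈ Prod.snd '' T x, ∃ y < x, b ∈ Prod.snd '' T y := by
    rintro x hx _ ⟨p, hp, rfl⟩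
    obtain ⟨y, hyx, hpy⟩ := hlim x hx p hp
    exact ⟨y, hyx, mem_image_of_mem _ hpy⟩
  exact (Monotone.continuous_of_isLUB (fun _ _ h => image_mono (hT h)) hfst
    fun x => (isLUB_prod.1 (hg x)).1).prodMk
    (Monotone.continuous_of_isLUB (fun _ _ h => image_mono (hT h)) hsnd
    fun x => (isLUB_prod.1 (hg x)).2)

theorem exists_lower_corner_of_mem_closure [WellFoundedLT β] {C : Set (α × β)} {a : α} {b : β}
    (hab : (a, b) ∈ closure C) (ha : a ∉ closure {x | (x, b) ∈ C})
    (hb : b ∉ closure {y | (a, y) ∈ C}) :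
    ∃ x₀ < a, ∃ y₀ < b, (∀ x ∈ Ioc x₀ a, (x, b) ∉ C) ∧ (∀ y ∈ Ioc y₀ b, (a, y) ∉ C) ∧
      ∀ x < a, ∀ y < b, ∃ q ∈ C, x < q.1 ∧ q.1 < a ∧ y < q.2 ∧ q.2 < b := by
  have hU₁ : (closure {x | (x, b) ∈ C})ᶜ ∩ Iic a ∈ 𝓝 a :=
    inter_mem (isClosed_closure.isOpen_compl.mem_nhds ha) (Iic_mem_nhds_self a)
  have hU₂ : (closure {y | (a, y) ∈ C})ᶜ ∩ Iic b ∈ 𝓝 b :=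
    inter_mem (isClosed_closure.isOpen_compl.mem_nhds hb) (Iic_mem_nhds_self b)
  have key : ∀ t₁ ∈ 𝓝 a, ∀ t₂ ∈ 𝓝 b, ∃ q ∈ C, q.1 ∈ t₁ ∧ q.2 ∈ t₂ ∧ q.1 < a ∧ q.2 < b := by
    intro t₁ ht₁ t₂ ht₂
    obtain ⟨q, ⟨⟨hq₁, hq₁b, hq₁a⟩, hq₂, hq₂a, hq₂b⟩, hqC⟩ :=
      mem_closure_iff_nhds.1 hab _ (prod_mem_nhds (inter_mem ht₁ hU₁) (inter_mem ht₂ hU₂))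
    refine ⟨q, hqC, hq₁, hq₂, hq₁a.lt_of_ne fun h => hq₂a (subset_closure ?_),
      hq₂b.lt_of_ne fun h => hq₁b (subset_closure ?_)⟩
    · simpa [← h] using hqC
    · simpa [← h] using hqC
  obtain ⟨q₀, -, -, -, hq₀a, hq₀b⟩ := key univ univ_mem univ univ_mem
  obtain ⟨x₀, hx₀, hx₀U⟩ := exists_Ioc_subset_of_mem_nhds hU₁ ⟨q₀.1, hq₀a⟩
  obtain ⟨y₀, hy₀, hy₀U⟩ := exists_Ioc_subset_of_mem_nhds hU₂ ⟨q₀.2, hq₀b⟩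
  refine ⟨x₀, hx₀, y₀, hy₀, fun x hx hxC => (hx₀U hx).1 (subset_closure hxC),
    fun y hy hyC => (hy₀U hy).1 (subset_closure hyC), fun x hxa y hyb => ?_⟩
  obtain ⟨q, hqC, hq₁, hq₂, hqa, hqb⟩ := key _ (Ioi_mem_nhds hxa) _ (Ioi_mem_nhds hyb)
  exact ⟨q, hqC, hq₁, hqa, hq₂, hqb⟩

end WellOrderedSpace

section AlmostClosed

variable {J : Type v} [LinearOrder J] {I : Set J}

theorem AlmostClosed.nonempty (hI : AlmostClosed I) : I.Nonempty := by
  obtain ⟨ℓ, hℓ, -⟩ := hI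
  by_contra h
  simp [not_nonempty_iff_eq_empty.1 h] at hℓ

theorem AlmostClosed.exists_gt (hI : AlmostClosed I) {i : J} (hi : i ∈ I) : ∃ j ∈ I, i < j := by
  obtain ⟨ℓ, hℓ, hℓI, -⟩ := hI
  by_contra! h
  have hℓcl : ℓ ∈ closure (((↑) : J → WithTop J) '' I) := (hℓ.symm ▸ mem_singleton ℓ).1
  have : ℓ ≤ i := closure_minimal (image_subset_iff.2 fun j hj => WithTop.coe_le_coe.2 (h j hj))
    isClosed_Iic hℓcl
  exact (hℓI _ (mem_image_of_mem _ hi)).not_ge this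

theorem AlmostClosed.top_mem_closure_range (hI : AlmostClosed I) :
    (⊤ : WithTop I) ∈ closure (range ((↑) : I → WithTop I)) := by
  obtain ⟨i, hi⟩ := hI.nonempty
  refine IsLUB.mem_closure ⟨fun _ _ => le_top, fun u hu => ?_⟩ ⟨_, mem_range_self ⟨i, hi⟩⟩
  induction u with
  | top => exact le_rfl
  | coe u =>
    obtain ⟨j, hj, huj⟩ := hI.exists_gt u.2
    exact absurd (hu (mem_range_self ⟨j, hj⟩)) (by simpa [← Subtype.coe_lt_coe] using huj)

def withTopEmbedding (I : Set J) : WithTop I ↪o WithTop J :=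
  (OrderEmbedding.subtype (· ∈ I)).withTopMap

variable {S : Set J} {ℓ : WithTop J}

def closureBelow (S : Set J) (ℓ : WithTop J) : Set J :=
  {j | (j : WithTop J) ∈ closure ((↑) '' S) ∧ (j : WithTop J) < ℓ}

theorem subset_closureBelow (hlt : ∀ s ∈ S, (s : WithTop J) < ℓ) : S ⊆ closureBelow S ℓ :=
  fun s hs => ⟨subset_closure (mem_image_of_mem _ hs), hlt s hs⟩

theorem image_coe_closureBelow :
    ((↑) : J → WithTop J) '' closureBelow S ℓ = closure ((↑) '' S) ∩ Iio ℓ := by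
  refine Subset.antisymm (image_subset_iff.2 fun j hj => hj) fun x ⟨hx, hxℓ⟩ => ?_
  obtain ⟨j, rfl⟩ := WithTop.ne_top_iff_exists.1 (ne_top_of_lt hxℓ : x ≠ ⊤)
  exact mem_image_of_mem _ ⟨hx, hxℓ⟩

theorem almostClosed_closureBelow (hne : S.Nonempty) (hℓ : IsLUB ((↑) '' S) ℓ)
    (hlt : ∀ s ∈ S, (s : WithTop J) < ℓ) : AlmostClosed (closureBelow S ℓ) := by
  have hsub : ((↑) : J → WithTop J) '' S ⊆ closure ((↑) '' S) ∩ Iio ℓ := by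
    rintro _ ⟨s, hs, rfl⟩
    exact ⟨subset_closure (mem_image_of_mem _ hs), hlt s hs⟩
  have hcl : closure (closure (((↑) : J → WithTop J) '' S) ∩ Iio ℓ) = closure ((↑) '' S) :=
    (closure_minimal inter_subset_left isClosed_closure).antisymm (closure_mono hsub)
  have hle : closure (((↑) : J → WithTop J) '' S) ⊆ Iic ℓ := closure_minimal hℓ.1 isClosed_Iic
  unfold AlmostClosed AlmostClosedIn
  rw [image_coe_closureBelow, hcl]
  refine ⟨ℓ, ?_, fun x hx => hx.2, fun u hu => hℓ.2 fun t ht => (hu t (hsub ht)).le⟩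
  ext x
  rw [Set.mem_sdiff, mem_inter_iff, mem_singleton_iff, mem_Iio, not_and]
  exact ⟨fun ⟨hx, hxℓ⟩ => (hle hx).antisymm (not_lt.1 (hxℓ hx)),
    by rintro rfl; exact ⟨hℓ.mem_closure (hne.image _), fun _ => lt_irrefl x⟩⟩

theorem coe_mem_closure_inter_Iio_of_closureBelow [WellFoundedLT J] {x : J}
    (hx : x ∈ closureBelow S ℓ)
    (hlim : ((⟨x, hx⟩ : closureBelow S ℓ) : WithTop (closureBelow S ℓ)) ∈
      closure (Iio ((⟨x, hx⟩ : closureBelow S ℓ) : WithTop (closureBelow S ℓ)))) :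
    (x : WithTop J) ∈ closure ((↑) '' S ∩ Iio (x : WithTop J)) := by
  have coe_lt {a b : closureBelow S ℓ} :
      (a : WithTop (closureBelow S ℓ)) < b ↔ ((a : J) : WithTop J) < (b : J) := by simp
  set T := ((↑) : J → WithTop J) '' S ∩ Iio (x : WithTop J)
  obtain ⟨y, hy⟩ := exists_isLUB_of_wellFoundedLT T
  have hTne : T.Nonempty := by
    obtain ⟨z, hz⟩ := closure_nonempty_iff.1 ⟨_, hlim⟩
    induction z with
    | top => exact (not_top_lt (mem_Iio.1 hz)).elim
    | coe z =>
      obtain ⟨t, ht, htz⟩ := exists_le_of_mem_closure z.2.1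
      exact ⟨t, ht, htz.trans_lt (coe_lt.1 hz)⟩
  rcases (hy.2 fun t ht => ht.2.le : y ≤ x).lt_or_eq with hyx | rfl
  · exfalso
    obtain ⟨j, rfl⟩ := WithTop.ne_top_iff_exists.1 (ne_top_of_lt hyx : y ≠ ⊤)
    have hj : j ∈ closureBelow S ℓ :=
      ⟨closure_mono inter_subset_left (hy.mem_closure hTne), hyx.trans hx.2⟩
    obtain ⟨z, hjz, hzx⟩ := mem_closure_iff.1 hlim (Ioi ((⟨j, hj⟩ : closureBelow S ℓ) :
      WithTop (closureBelow S ℓ))) isOpen_Ioi (coe_lt.2 hyx)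
    induction z with
    | top => exact (not_top_lt (mem_Iio.1 hzx)).elim
    | coe z =>
      have hzT : ((↑) : J → WithTop J) '' S ∩ Iic (z : J) ⊆ T := fun t ht =>
        ⟨ht.1, ht.2.trans_lt (coe_lt.1 hzx)⟩
      have : ((z : J) : WithTop J) ≤ j :=
        closure_minimal (hzT.trans hy.1) isClosed_Iic (mem_closure_inter_Iic z.2.1)
      exact (coe_lt.1 hjz).not_ge this
  · exact hy.mem_closure hTne

theorem exists_almostClosed_of_isolated [WellFoundedLT J] {T : Set (WithTop J)} (hne : T.Nonempty)
    (hmax : ∀ t ∈ T, ∃ t' ∈ T, t < t') (hiso : ∀ t ∈ T, t ∉ closure (T ∩ Iio t)) :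
    ∃ I : Set J, AlmostClosed I ∧ (∀ z : WithTop I, ∃ t ∈ T, t ≤ withTopEmbedding I z) ∧
      (∀ i : I, ∃ t ∈ T, ((i : J) : WithTop J) < t) ∧
      ∀ z : WithTop I, z ∈ closure (Iio z) → ∀ t ∈ T, t ≤ withTopEmbedding I z →
        ∃ z' < z, t ≤ withTopEmbedding I z' := by
  have hT : T ⊆ range ((↑) : J → WithTop J) := fun t ht =>
    let ⟨_, _, htt'⟩ := hmax t ht
    WithTop.ne_top_iff_exists.1 (ne_top_of_lt htt')
  set S : Set J := (↑) ⁻¹' T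
  have hS : (↑) '' S = T := image_preimage_eq_of_subset hT
  obtain ⟨ℓ, hℓ⟩ := exists_isLUB_of_wellFoundedLT T
  have hlt : ∀ s ∈ S, (s : WithTop J) < ℓ := fun s hs =>
    let ⟨_, ht, hst⟩ := hmax _ hs
    hst.trans_le (hℓ.1 ht)
  have hSne : S.Nonempty :=
    let ⟨t, ht⟩ := hne
    let ⟨j, hj⟩ := hT ht
    ⟨j, by rwa [mem_preimage, hj]⟩
  refine ⟨closureBelow S ℓ, almostClosed_closureBelow hSne (by rwa [hS]) hlt, fun z => ?_,
    fun i => ?_, fun z hz t ht htz => ?_⟩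
  · induction z with
    | top => exact hne.imp fun t ht => ⟨ht, le_top⟩
    | coe i =>
      have hi := i.2.1
      rw [hS] at hi
      exact exists_le_of_mem_closure hi
  · obtain ⟨t, ht, hit, -⟩ := hℓ.exists_between i.2.2
    exact ⟨t, ht, hit⟩
  · obtain ⟨j, rfl⟩ := hT ht
    have hjI := subset_closureBelow hlt ht
    refine ⟨((⟨j, hjI⟩ : closureBelow S ℓ) : WithTop _), ?_, le_rfl⟩
    rcases htz.lt_or_eq with h | h
    · exact (withTopEmbedding _).lt_iff_lt.1 h
    · obtain rfl : z = ((⟨j, hjI⟩ : closureBelow S ℓ) : WithTop _) :=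
        (withTopEmbedding _).injective h.symm
      have hj := coe_mem_closure_inter_Iio_of_closureBelow hjI hz
      rw [hS] at hj
      exact (hiso _ ht hj).elim

end AlmostClosed

section JClosed

variable {J : Type v} [LinearOrder J] {X Y : Type*} [TopologicalSpace X] [TopologicalSpace Y]

theorem JClosedSet.preimage {C : Set Y} (hC : JClosedSet J Y C) {g : X → Y} (hg : Continuous g) :
    JClosedSet J X (g ⁻¹' C) :=
  fun I hI f hf hfC => hC I hI (g ∘ f) (hg.comp hf) hfC

theorem jClosedSet_of_isClosed_preimage {C : Set X}
    (h : ∀ I : Set J, AlmostClosed I → ∀ f : WithTop I → X, Continuous f → IsClosed (f ⁻¹' C)) :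
    JClosedSet J X C :=
  fun I hI f hf hfC =>
    (h I hI f hf).closure_subset_iff.2 (range_subset_iff.2 hfC) hI.top_mem_closure_range

theorem IsJConvergence.isClosed (hX : IsJConvergence J X) {C : Set X} (hC : JClosedSet J X C) :
    IsClosed C := by
  by_contra h
  obtain ⟨I, hI, f, hf, hfC, hf_top⟩ := hX C h
  exact hf_top (hC I hI f hf hfC)

theorem IsJConvergence.isOpen_of_isOpen_preimage (hX : IsJConvergence J X) {U : Set X}
    (h : ∀ I : Set J, AlmostClosed I → ∀ f : WithTop I → X, Continuous f → IsOpen (f ⁻¹' U)) :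
    IsOpen U :=
  isClosed_compl_iff.1 <| hX.isClosed <| jClosedSet_of_isClosed_preimage fun I hI f hf =>
    (h I hI f hf).isClosed_compl

end JClosed

section Probe

variable {J : Type v} [LinearOrder J] [WellFoundedLT J] {I₁ : Set J}
  {β : Type*} [LinearOrder β] [WellFoundedLT β] [OrderTop β] [TopologicalSpace β] [OrderTopology β]

theorem JClosedSet.mem_of_isLUB_of_isChain_of_isolated {C : Set (WithTop I₁ × β)}
    (hC : JClosedSet J (WithTop I₁ × β) C) {W : Set (WithTop I₁ × β)} (hne : W.Nonempty)
    (hchain : IsChain (· ≤ ·) W) (hmax : ∀ w ∈ W, ∃ w' ∈ W, w.1 < w'.1)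
    (hiso : ∀ w ∈ W, withTopEmbedding I₁ w.1 ∉
      closure ((withTopEmbedding I₁ ·.1) '' W ∩ Iio (withTopEmbedding I₁ w.1)))
    {s : WithTop I₁ × β} (hs : IsLUB W s) (hmin : ∀ p ∈ closure W, p.1 < s.1 → p ∈ C) :
    s ∈ C := by
  set φ : WithTop I₁ × β → WithTop J := (withTopEmbedding I₁ ·.1)
  obtain ⟨I, hI, hbelow, habove, hlim⟩ := exists_almostClosed_of_isolated (hne.image φ)
    (fun _ ⟨w, hw, hwt⟩ => let ⟨w', hw', hww'⟩ := hmax w hw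
      ⟨φ w', mem_image_of_mem φ hw', hwt ▸ (withTopEmbedding I₁).lt_iff_lt.2 hww'⟩)
    (fun _ ⟨w, hw, hwt⟩ => hwt ▸ hiso w hw)
  set T : WithTop I → Set (WithTop I₁ × β) := fun z => {w ∈ W | φ w ≤ withTopEmbedding I z}
  have hTW : ∀ z, T z ⊆ W := fun _ => sep_subset _ _
  have hTne : ∀ z, (T z).Nonempty := fun z =>
    let ⟨_, ⟨w, hw, hwt⟩, htz⟩ := hbelow z
    ⟨w, hw, hwt ▸ htz⟩
  choose g₁ hg₁ using fun z => exists_isLUB_of_wellFoundedLT (Prod.fst '' T z)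
  choose g₂ hg₂ using fun z => exists_isLUB_of_wellFoundedLT (Prod.snd '' T z)
  have hg : ∀ z, IsLUB (T z) (g₁ z, g₂ z) := fun z => isLUB_prod.2 ⟨hg₁ z, hg₂ z⟩
  have hT : Monotone T := fun _ _ h w hw =>
    ⟨hw.1, hw.2.trans ((withTopEmbedding I).le_iff_le.2 h)⟩
  have hTlim : ∀ z, z ∈ closure (Iio z) → ∀ w ∈ T z, ∃ z' < z, w ∈ T z' := by
    rintro z hz w ⟨hw, hwz⟩
    exact (hlim z hz _ (mem_image_of_mem φ hw) hwz).imp fun _ h => ⟨h.1, hw, h.2⟩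
  have hcont : Continuous fun z => (g₁ z, g₂ z) := hT.continuous_of_isLUB_prod hTlim hg
  have hvals : ∀ i : I, (g₁ i, g₂ i) ∈ C := by
    intro i
    refine hmin _ (closure_mono (hTW i)
      ((hchain.mono (hTW i)).isLUB_mem_closure (hTne i) (hg i))) ?_
    obtain ⟨_, ⟨w, hw, rfl⟩, hiw⟩ := habove i
    obtain ⟨w', hw', hww'⟩ := hmax w hw
    have : g₁ i ≤ w.1 := (hg₁ i).2 <| by
      rintro _ ⟨u, hu, rfl⟩
      exact (withTopEmbedding I₁).le_iff_le.1 (hu.2.trans_lt hiw).le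
    exact this.trans_lt (hww'.trans_le (hs.1 hw').1)
  have hTtop : T ⊤ = W := Set.ext fun w => and_iff_left le_top
  exact (hg ⊤).unique (hTtop ▸ hs) ▸ hC I hI _ hcont hvals

theorem JClosedSet.mem_of_isLUB_of_isChain {C : Set (WithTop I₁ × β)}
    (hC : JClosedSet J (WithTop I₁ × β) C) {V : Set (WithTop I₁ × β)} (hne : V.Nonempty)
    (hchain : IsChain (· ≤ ·) V) (hmax : ∀ v ∈ V, ∃ v' ∈ V, v.1 < v'.1)
    {s : WithTop I₁ × β} (hs : IsLUB V s) (hmin : ∀ p ∈ closure V, p.1 < s.1 → p ∈ C) :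
    s ∈ C := by
  set φ : WithTop I₁ × β → WithTop J := (withTopEmbedding I₁ ·.1)
  -- At a point whose first coordinate is a limit of earlier ones the probe could jump; such
  -- points can be dropped without changing the supremum.
  set W := {v ∈ V | φ v ∉ closure (φ '' V ∩ Iio (φ v))}
  have hWV : W ⊆ V := sep_subset _ _
  have hcofinal : ∀ v ∈ V, ∃ w ∈ W, v ≤ w ∧ v.1 < w.1 := by
    intro v hv
    obtain ⟨v', hv', hvv'⟩ := hmax v hv
    obtain ⟨_, ⟨w, hw, rfl⟩, hvw, hwW⟩ := exists_gt_notMem_closure_inter_Iio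
      ⟨φ v', mem_image_of_mem φ hv', (withTopEmbedding I₁).lt_iff_lt.2 hvv'⟩
    have hvw : v.1 < w.1 := (withTopEmbedding I₁).lt_iff_lt.1 hvw
    exact ⟨w, ⟨hw, hwW⟩, (hchain.total hv hw).resolve_right fun h => h.1.not_gt hvw, hvw⟩
  have hWne : W.Nonempty :=
    let ⟨v, hv⟩ := hne
    let ⟨w, hw, _⟩ := hcofinal v hv
    ⟨w, hw⟩
  have hWs : IsLUB W s := ⟨fun w hw => hs.1 (hWV hw), fun u hu => hs.2 fun v hv =>
    let ⟨w, hw, hvw, _⟩ := hcofinal v hv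
    hvw.trans (hu hw)⟩
  exact hC.mem_of_isLUB_of_isChain_of_isolated hWne (hchain.mono hWV)
    (fun w hw => (hcofinal w (hWV hw)).imp fun _ h => ⟨h.1, h.2.2⟩)
    (fun w hw hcl => hw.2 (closure_mono (inter_subset_inter_left _ (image_mono hWV)) hcl))
    hWs fun p hp => hmin p (closure_mono hWV hp)

end Probe

section Products

variable {J : Type v} [LinearOrder J] [WellFoundedLT J]

theorem JClosedSet.isClosed_of_withTop {I : Set J} {C : Set (WithTop I)}
    (hC : JClosedSet J (WithTop I) C) : IsClosed C := by
  by_contra hnc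
  obtain ⟨a, ⟨hacl, haC⟩, hmin⟩ := wellFounded_lt.has_min (closure C \ C)
    (sdiff_nonempty.2 fun h => hnc (isClosed_of_closure_subset h))
  set A := C ∩ Iio a
  have haA : a ∈ closure A := mem_closure_inter_Iio hacl haC
  set V := (fun x => (x, x)) '' A
  have hfst : Prod.fst '' V = A := by simp [V, image_image]
  have hsnd : Prod.snd '' V = A := by simp [V, image_image]
  have hA : IsLUB A a := isLUB_of_mem_closure (fun _ hy => hy.2.le) haA
  have hV : IsLUB V (a, a) := isLUB_prod.2 ⟨by rwa [hfst], by rwa [hsnd]⟩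
  refine haC ((hC.preimage continuous_fst).mem_of_isLUB_of_isChain
    ((closure_nonempty_iff.1 ⟨a, haA⟩).image _) ?_ ?_ hV ?_)
  · rintro _ ⟨x, -, rfl⟩ _ ⟨y, -, rfl⟩ -
    exact (le_total x y).imp (fun h => ⟨h, h⟩) fun h => ⟨h, h⟩
  · rintro _ ⟨x, hx, rfl⟩
    obtain ⟨y, hxy, hyA⟩ := mem_closure_iff.1 haA (Ioi x) isOpen_Ioi hx.2
    exact ⟨(y, y), mem_image_of_mem _ hyA, hxy⟩
  · intro p hp hpa
    have hpA : p.1 ∈ closure A :=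
      hfst ▸ image_closure_subset_closure_image continuous_fst (mem_image_of_mem _ hp)
    by_contra hpC
    exact hmin p.1 ⟨closure_mono inter_subset_left hpA, hpC⟩ hpa

theorem JClosedSet.isClosed_of_withTop_prod {I₁ I₂ : Set J} {C : Set (WithTop I₁ × WithTop I₂)}
    (hC : JClosedSet J (WithTop I₁ × WithTop I₂) C) : IsClosed C := by
  by_contra hnc
  obtain ⟨a, ⟨p, hp, rfl⟩, ha⟩ := wellFounded_lt.has_min (Prod.fst '' (closure C \ C))
    ((sdiff_nonempty.2 fun h => hnc (isClosed_of_closure_subset h)).image _)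
  obtain ⟨b, ⟨hbcl, hbC⟩, -⟩ := wellFounded_lt.has_min {b | (p.1, b) ∈ closure C \ C} ⟨p.2, hp⟩
  have hmin : ∀ q ∈ closure C, q.1 < p.1 → q ∈ C := fun q hq hqa =>
    by_contra fun hqC => ha q.1 ⟨q, ⟨hq, hqC⟩, rfl⟩ hqa
  obtain ⟨x₀, hx₀, y₀, hy₀, hx₀b, hy₀a, hdense⟩ := exists_lower_corner_of_mem_closure hbcl
    ((hC.preimage (Continuous.prodMk_left b)).isClosed_of_withTop.closure_eq ▸ hbC)
    ((hC.preimage (Continuous.prodMk_right p.1)).isClosed_of_withTop.closure_eq ▸ hbC)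
  obtain ⟨V, hVB, ⟨v, hv⟩, hVchain, hVmax, hVlub⟩ :=
    exists_isChain_of_forall_exists_gt (B := C ∩ Ioo x₀ p.1 ×ˢ Ioo y₀ b)
      (fun x y hx hxa hy hyb => (hdense x hxa y hyb).imp fun q ⟨hqC, hq₁, hqa, hq₂, hqb⟩ =>
        ⟨⟨hqC, ⟨hx.trans_lt hq₁, hqa⟩, hy.trans_lt hq₂, hqb⟩, hq₁, hq₂⟩)
      inter_subset_right hx₀ hy₀
  obtain ⟨s₁, hs₁⟩ := exists_isLUB_of_wellFoundedLT (Prod.fst '' V)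
  obtain ⟨s₂, hs₂⟩ := exists_isLUB_of_wellFoundedLT (Prod.snd '' V)
  have hs : IsLUB V (s₁, s₂) := isLUB_prod.2 ⟨hs₁, hs₂⟩
  have hsle : (s₁, s₂) ≤ (p.1, b) := hs.2 fun v hv => ⟨(hVB hv).2.1.2.le, (hVB hv).2.2.2.le⟩
  have hvs : v ≤ (s₁, s₂) := hs.1 hv
  have hsC : (s₁, s₂) ∈ C := hC.mem_of_isLUB_of_isChain ⟨v, hv⟩ hVchain hVmax hs
    fun q hq hqs => hmin q (closure_mono (hVB.trans inter_subset_left) hq) (hqs.trans_le hsle.1)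
  rcases hVlub _ hs with h | h
  · exact hy₀a s₂ ⟨(hVB hv).2.2.1.trans_le hvs.2, hsle.2⟩ (h ▸ hsC)
  · exact hx₀b s₁ ⟨(hVB hv).2.1.1.trans_le hvs.1, hsle.1⟩ (h ▸ hsC)

variable {X Y : Type*} [TopologicalSpace X] [TopologicalSpace Y]

theorem JClosedSet.isClosed_of_withTop_prod_left (hY : IsJConvergence J Y) {I : Set J}
    {C : Set (WithTop I × Y)} (hC : JClosedSet J (WithTop I × Y) C) : IsClosed C := by
  rw [← isOpen_compl_iff, isOpen_iff_mem_nhds]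
  rintro ⟨z₀, y₀⟩ h
  obtain ⟨R, hR, hRc, hRC⟩ := exists_mem_nhds_isClosed_subset
    ((hC.preimage (Continuous.prodMk_left y₀)).isClosed_of_withTop.isOpen_compl.mem_nhds h)
  have : CompactSpace R := isCompact_iff_compactSpace.1 hRc.isCompact
  have hW : IsOpen {y | ∀ z ∈ R, (z, y) ∉ C} := hY.isOpen_of_isOpen_preimage fun I' _ t ht => by
    have hE : IsClosed (Prod.map (↑) id ⁻¹' (Prod.map id t ⁻¹' C) : Set (R × WithTop I')) :=
      (hC.preimage (continuous_id.prodMap ht)).isClosed_of_withTop_prod.preimage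
        (continuous_subtype_val.prodMap continuous_id)
    convert (isClosedMap_snd_of_compactSpace _ hE).isOpen_compl using 1
    ext w
    simp
  exact mem_of_superset (prod_mem_nhds hR (hW.mem_nhds fun z hz => hRC hz))
    fun _ ⟨hz, hy⟩ => hy _ hz

theorem JClosedSet.isClosed_preimage_prodMap (hX : IsJConvergence J X) (hY : IsJConvergence J Y)
    {C : Set (X × Y)} (hC : JClosedSet J (X × Y) C) {K : Type*} [TopologicalSpace K]
    [CompactSpace K] [T2Space K] {s : K → Y} (hs : Continuous s) :
    IsClosed (Prod.map id s ⁻¹' C) := by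
  rw [← isOpen_compl_iff, isOpen_iff_mem_nhds]
  rintro ⟨x₀, k₀⟩ h
  obtain ⟨Q, hQ, hQc, hQC⟩ := exists_mem_nhds_isClosed_subset
    (((hY.isClosed (hC.preimage (Continuous.prodMk_right x₀))).isOpen_compl.preimage hs).mem_nhds h)
  have : CompactSpace Q := isCompact_iff_compactSpace.1 hQc.isCompact
  have hV : IsOpen {x | ∀ k ∈ Q, (x, s k) ∉ C} := hX.isOpen_of_isOpen_preimage fun I' _ t ht => by
    have hE : IsClosed (Prod.map id (s ∘ (↑)) ⁻¹' (Prod.map t id ⁻¹' C) : Set (WithTop I' × Q)) :=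
      ((hC.preimage (ht.prodMap continuous_id)).isClosed_of_withTop_prod_left hY).preimage
        (continuous_id.prodMap (hs.comp continuous_subtype_val))
    convert (isClosedMap_fst_of_compactSpace _ hE).isOpen_compl using 1
    ext z
    simp
  exact mem_of_superset (prod_mem_nhds (hV.mem_nhds fun k hk => hQC hk) hQ)
    fun _ ⟨hx, hk⟩ => hx _ hk

end Products

theorem stmt17_general {J : Type v} [LinearOrder J] [WellFoundedLT J] {X : Type u} {Y : Type w}
    [TopologicalSpace X] [TopologicalSpace Y]
    (hX : IsJConvergence J X) (hY : IsJConvergence J Y) :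
    kTop.{v} (X × Y) = jTop J (X × Y) := by
  refine congrArg generateFrom (Set.ext fun U => ⟨fun hU => ?_, fun hU K _ _ _ f hf => ?_⟩)
  · exact jClosedSet_of_isClosed_preimage fun I _ f hf =>
      (hU _ _ inferInstance inferInstance f hf).isClosed_compl
  · exact isClosed_compl_iff.1 <|
      (JClosedSet.isClosed_preimage_prodMap hX hY hU hf.snd).preimage (hf.fst.prodMk continuous_id)

theorem stmt17 {J : Type v} [LinearOrder J] [WellFoundedLT J] [TopologicalSpace J]
    [OrderTopology J] [NoncompactSpace J] {X : Type u} {Y : Type w}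
    [TopologicalSpace X] [TopologicalSpace Y]
    (hX : IsJConvergence J X) (hY : IsJConvergence J Y) :
    kTop.{v} (X × Y) = jTop J (X × Y) :=
  stmt17_general hX hY
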